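/- Let C be a linear code of length n over R and define C₁, C₂, C₃ ⊆ F_pⁿ by C₁ = {x : ∃y,z, η₁x + η₂y + η₃z ∈ C}, and similarly C₂, C₃. Then C = η₁C₁ ⊕ η₂C₂ ⊕ η₃C₃, and this expression is unique. -/

import Mathlib

open Polynomial

abbrev Rp (p : ℕ) := AdjoinRoot (X ^ 3 - X : (ZMod p)[X])
noncomputable def uu (p : ℕ) : Rp p := AdjoinRoot.root _
noncomputable def am (p : ℕ) : ZMod p →+* Rp p := algebraMap (ZMod p) (Rp p)
noncomputable def eta1 (p : ℕ) : Rp p := 1 - uu p ^ 2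
noncomputable def eta2 (p : ℕ) : Rp p := am p 2⁻¹ * (uu p + uu p ^ 2)
noncomputable def eta3 (p : ℕ) : Rp p := am p 2⁻¹ * (-uu p + uu p ^ 2)

/-- Encode vectors `x, y, z` over `F_p` as `η₁x + η₂y + η₃z ∈ Rⁿ`. -/
noncomputable def encEta (p n : ℕ) (x y z : Fin n → ZMod p) : Fin n → Rp p :=
  fun i => eta1 p * am p (x i) + eta2 p * am p (y i) + eta3 p * am p (z i)

noncomputable def comp1 (p n : ℕ) (C : Set (Fin n → Rp p)) : Set (Fin n → ZMod p) :=
  {x | ∃ y z, encEta p n x y z ∈ C}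
noncomputable def comp2 (p n : ℕ) (C : Set (Fin n → Rp p)) : Set (Fin n → ZMod p) :=
  {y | ∃ x z, encEta p n x y z ∈ C}
noncomputable def comp3 (p n : ℕ) (C : Set (Fin n → Rp p)) : Set (Fin n → ZMod p) :=
  {z | ∃ x y, encEta p n x y z ∈ C}

/-!
Evaluating at the three roots `0, 1, -1` of `u³ - u` gives ring maps `R → F_p` (together, the
Chinese-remainder isomorphism `R ≅ F_p³`) sending `η₁, η₂, η₃` to the standard idempotents. Since
`ηᵢ` kills `u - aᵢ`, multiplication by `ηᵢ` factors through evaluation at `aᵢ`: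
`ηᵢ s = ηᵢ · evᵢ(s)`. With `η₁ + η₂ + η₃ = 1` this writes every `s` uniquely as
`η₁ ev₀(s) + η₂ ev₁(s) + η₃ ev₋₁(s)`, and it shows `η₁x + η₂y + η₃z` is the `R`-combination
`η₁c₁ + η₂c₂ + η₃c₃` of the codewords witnessing `x ∈ C₁`, `y ∈ C₂`, `z ∈ C₃`.
-/

namespace AdjoinRoot

variable {K : Type*} [CommRing K] {f : K[X]} {a : K}

noncomputable def evalRoot (a : K) (ha : f.IsRoot a) : AdjoinRoot f →ₐ[K] K :=
  liftAlgHom f (Algebra.ofId K K) a (by simpa [eval₂_eq_eval_map] using ha)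

@[simp]
theorem evalRoot_mk (ha : f.IsRoot a) (g : K[X]) : evalRoot a ha (mk f g) = g.eval a := by
  simp [evalRoot, eval₂_eq_eval_map]

@[simp]
theorem evalRoot_root (ha : f.IsRoot a) : evalRoot a ha (root f) = a :=
  liftAlgHom_root ..

@[simp]
theorem evalRoot_of (ha : f.IsRoot a) (k : K) : evalRoot a ha (of f k) = k :=
  liftAlgHom_of ..

theorem mul_eq_mul_algebraMap_evalRoot (ha : f.IsRoot a) {e : AdjoinRoot f}
    (he : e * (root f - algebraMap K _ a) = 0) (s : AdjoinRoot f) :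
    e * s = e * algebraMap K _ (evalRoot a ha s) := by
  induction s using AdjoinRoot.induction_on with
  | ih g =>
    obtain ⟨q, hq⟩ := X_sub_C_dvd_sub_C_eval (p := g) (a := a)
    have hfactor : mk f g - algebraMap K _ (evalRoot a ha (mk f g))
        = (root f - algebraMap K _ a) * mk f q := by
      rw [evalRoot_mk, algebraMap_eq, ← mk_C, ← mk_C, ← mk_X, ← map_sub, hq, map_mul, map_sub]
    rw [← sub_eq_zero, ← mul_sub, hfactor, ← mul_assoc, he, zero_mul]

end AdjoinRoot

open AdjoinRoot

variable {p n : ℕ}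

theorem ZMod.inv_two_mul_two (hp : Odd p) : (2⁻¹ : ZMod p) * 2 = 1 := by
  simpa [mul_comm] using ZMod.coe_mul_inv_eq_one 2 (Nat.coprime_two_left.mpr hp)

theorem am_inv_two_mul_two (hp : Odd p) : am p 2⁻¹ * 2 = 1 := by
  rw [← map_ofNat (am p) 2, ← map_mul, ZMod.inv_two_mul_two hp, map_one]

theorem uu_pow_three : uu p ^ 3 = uu p := by
  have := AdjoinRoot.eval₂_root (X ^ 3 - X : (ZMod p)[X])
  simp only [eval₂_sub, eval₂_pow, eval₂_X] at this
  exact sub_eq_zero.mp this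

theorem isRoot_of_pow_three_eq {a : ZMod p} (h : a ^ 3 = a) :
    (X ^ 3 - X : (ZMod p)[X]).IsRoot a := by
  simp [h]

noncomputable def crtHom (p : ℕ) : Rp p →ₐ[ZMod p] ZMod p × ZMod p × ZMod p :=
  (evalRoot 0 (isRoot_of_pow_three_eq (by ring))).prod
    ((evalRoot 1 (isRoot_of_pow_three_eq (by ring))).prod
      (evalRoot (-1) (isRoot_of_pow_three_eq (by ring))))

theorem evalRoot_encEta {a : ZMod p} (ha : (X ^ 3 - X : (ZMod p)[X]).IsRoot a)
    (x y z : Fin n → ZMod p) (i : Fin n) :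
    evalRoot a ha (encEta p n x y z i)
      = (1 - a ^ 2) * x i + 2⁻¹ * (a + a ^ 2) * y i + 2⁻¹ * (-a + a ^ 2) * z i := by
  simp [encEta, eta1, eta2, eta3, uu, am]

theorem crtHom_encEta (hp : Odd p) (x y z : Fin n → ZMod p) (i : Fin n) :
    crtHom p (encEta p n x y z i) = (x i, y i, z i) := by
  have h2 := ZMod.inv_two_mul_two hp
  simp only [crtHom, AlgHom.prod_apply, evalRoot_encEta, Prod.mk.injEq]
  exact ⟨by ring, by linear_combination y i * h2, by linear_combination z i * h2⟩

theorem eta1_mul_uu_sub : eta1 p * (uu p - am p 0) = 0 := by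
  rw [eta1, map_zero]
  linear_combination -(uu_pow_three (p := p))

theorem eta2_mul_uu_sub : eta2 p * (uu p - am p 1) = 0 := by
  rw [eta2, map_one]
  linear_combination am p 2⁻¹ * uu_pow_three (p := p)

theorem eta3_mul_uu_sub : eta3 p * (uu p - am p (-1)) = 0 := by
  rw [eta3, map_neg, map_one]
  linear_combination am p 2⁻¹ * uu_pow_three (p := p)

theorem eta1_mul (s : Rp p) : eta1 p * s = eta1 p * am p (crtHom p s).1 :=
  mul_eq_mul_algebraMap_evalRoot _ eta1_mul_uu_sub s

theorem eta2_mul (s : Rp p) : eta2 p * s = eta2 p * am p (crtHom p s).2.1 :=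
  mul_eq_mul_algebraMap_evalRoot _ eta2_mul_uu_sub s

theorem eta3_mul (s : Rp p) : eta3 p * s = eta3 p * am p (crtHom p s).2.2 :=
  mul_eq_mul_algebraMap_evalRoot _ eta3_mul_uu_sub s

theorem eta1_add_eta2_add_eta3 (hp : Odd p) : eta1 p + eta2 p + eta3 p = 1 := by
  rw [eta1, eta2, eta3]
  linear_combination uu p ^ 2 * am_inv_two_mul_two hp

theorem eq_eta_mul_crtHom (hp : Odd p) (s : Rp p) :
    s = eta1 p * am p (crtHom p s).1 + eta2 p * am p (crtHom p s).2.1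
      + eta3 p * am p (crtHom p s).2.2 := by
  rw [← eta1_mul, ← eta2_mul, ← eta3_mul, ← add_mul, ← add_mul, eta1_add_eta2_add_eta3 hp,
    one_mul]

noncomputable def decEta (r : Fin n → Rp p) :
    (Fin n → ZMod p) × (Fin n → ZMod p) × (Fin n → ZMod p) :=
  (fun i => (crtHom p (r i)).1, fun i => (crtHom p (r i)).2.1, fun i => (crtHom p (r i)).2.2)

theorem encEta_decEta (hp : Odd p) (r : Fin n → Rp p) :
    encEta p n (decEta r).1 (decEta r).2.1 (decEta r).2.2 = r :=
  funext fun i => (eq_eta_mul_crtHom hp (r i)).symm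

theorem decEta_encEta (hp : Odd p) (x y z : Fin n → ZMod p) :
    decEta (encEta p n x y z) = (x, y, z) := by
  simp only [decEta, crtHom_encEta hp]

theorem encEta_eq_smul_add (hp : Odd p) (x y z x₂ x₃ y₁ y₃ z₁ z₂ : Fin n → ZMod p) :
    encEta p n x y z
      = eta1 p • encEta p n x y₁ z₁ + eta2 p • encEta p n x₂ y z₂
        + eta3 p • encEta p n x₃ y₃ z := by
  funext i
  simp only [Pi.add_apply, Pi.smul_apply, smul_eq_mul]
  rw [eta1_mul, eta2_mul, eta3_mul]
  simp only [crtHom_encEta hp]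
  rfl

theorem code_decomposition (p n : ℕ) [Fact p.Prime] (hp : p ≠ 2)
    (C : Submodule (Rp p) (Fin n → Rp p)) :
    (∀ x ∈ comp1 p n C, ∀ y ∈ comp2 p n C, ∀ z ∈ comp3 p n C, encEta p n x y z ∈ C) ∧
    (∀ r ∈ C, ∃! t : (Fin n → ZMod p) × (Fin n → ZMod p) × (Fin n → ZMod p),
      t.1 ∈ comp1 p n C ∧ t.2.1 ∈ comp2 p n C ∧ t.2.2 ∈ comp3 p n C ∧
      r = encEta p n t.1 t.2.1 t.2.2) := by
  have hodd : Odd p := (Fact.out : p.Prime).odd_of_ne_two hp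
  refine ⟨fun x ⟨y₁, z₁, h₁⟩ y ⟨x₂, z₂, h₂⟩ z ⟨x₃, y₃, h₃⟩ => ?_, fun r hr => ?_⟩
  · rw [encEta_eq_smul_add hodd x y z x₂ x₃ y₁ y₃ z₁ z₂]
    exact add_mem (add_mem (C.smul_mem _ h₁) (C.smul_mem _ h₂)) (C.smul_mem _ h₃)
  · have hmem : encEta p n (decEta r).1 (decEta r).2.1 (decEta r).2.2 ∈ C := by
      rwa [encEta_decEta hodd]
    refine ⟨decEta r, ⟨⟨_, _, hmem⟩, ⟨_, _, hmem⟩, ⟨_, _, hmem⟩,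
      (encEta_decEta hodd r).symm⟩, ?_⟩
    rintro ⟨x, y, z⟩ ⟨-, -, -, rfl⟩
    exact (decEta_encEta hodd x y z).symm
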